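/- Let Γ be a free abelian group of finite rank with a skew-symmetric bilinear form ⟨-,-⟩ : Γ × Γ → ℤ, let g : Γ → Γ be a group automorphism with g² = id preserving ⟨-,-⟩, and suppose γ + g(γ) ∈ ker⟨-,-⟩ for all γ ∈ Γ. Let Ω : Γ → ℤ be a finitely supported function with Ω(g(γ)) = Ω(γ) for all γ, and suppose Ω(γ) = 0 whenever γ ∈ ker⟨-,-⟩. Then for every β ∈ Γ, the sum Σ_{γ ∈ Γ} Ω(γ)·⟨β, γ⟩ = 0; moreover the same conclusion holds when the sum is restricted to any g-invariant subset S ⊆ Γ. -/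
import Mathlib


/-- Abstract triviality of wall-crossing (Stokes) automorphism exponents: if a
skew-symmetric integral form on a finitely generated free abelian group `Γ`, an
involution `g` preserving it with `γ + g γ` always in the kernel, and a finitely
supported `g`-invariant function `Ω` vanishing on the kernel are given, then
`Σ_γ Ω(γ)·⟨β,γ⟩ = 0` for all `β`, also when restricted to any `g`-invariant subset. -/
theorem stmt10 {Γ : Type*} [AddCommGroup Γ] [Module.Free ℤ Γ] [Module.Finite ℤ Γ]
    (B : Γ →ₗ[ℤ] Γ →ₗ[ℤ] ℤ)
    (hskew : ∀ γ δ : Γ, B γ δ = - B δ γ)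
    (g : Γ ≃+ Γ) (hg2 : ∀ γ, g (g γ) = γ)
    (hgB : ∀ γ δ, B (g γ) (g δ) = B γ δ)
    (hker : ∀ γ δ, B (γ + g γ) δ = 0)
    (Ω : Γ →₀ ℤ)
    (hΩg : ∀ γ, Ω (g γ) = Ω γ)
    (hΩker : ∀ γ, (∀ δ, B γ δ = 0) → Ω γ = 0) :
    (∀ β : Γ, ∑ γ ∈ Ω.support, Ω γ * B β γ = 0) ∧
    (∀ S : Set Γ, (∀ γ, γ ∈ S ↔ g γ ∈ S) →
      ∀ β : Γ, ∑ γ ∈ Ω.support, S.indicator (fun γ => Ω γ * B β γ) γ = 0) := by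
  have hB : ∀ β γ : Γ, B β (g γ) = - B β γ := by
    intro β γ
    have h2 : B β (γ + g γ) = 0 := by rw [hskew, hker]; ring
    have h3 : B β γ + B β (g γ) = 0 := by simpa [map_add] using h2
    linarith
  have key : ∀ (F : Γ → ℤ), (∀ γ, F (g γ) = - F γ) → ∑ γ ∈ Ω.support, F γ = 0 := by
    intro F hF
    refine Finset.sum_involution (fun a _ => g a) (fun a _ => by rw [hF]; ring) ?_ ?_ ?_
    · intro a ha hne heq
      apply hne
      have heq' : g a = a := heq
      have h := hF a
      rw [heq'] at h
      linarith
    · intro a ha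
      show g a ∈ Ω.support
      rw [Finsupp.mem_support_iff] at ha ⊢
      rw [hΩg]; exact ha
    · intro a ha; exact hg2 a
  constructor
  · intro β
    exact key _ (fun γ => by rw [hΩg, hB]; ring)
  · intro S hS β
    apply key
    intro γ
    by_cases h : γ ∈ S
    · rw [Set.indicator_of_mem ((hS γ).mp h), Set.indicator_of_mem h, hΩg, hB]; ring
    · rw [Set.indicator_of_notMem (fun hc => h ((hS γ).mpr hc)),
        Set.indicator_of_notMem h]; ring
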